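/- Let X1,...,Xn be i.i.d. random variables drawn from a non-atomic continuous distribution on [0,1] with n ≥ 2. Then for any distinct indices i, i', the conditional expectation E[Xi | Xi is the unique maximum among X1,...,Xn] is strictly greater than E[Xi | Xi' is the unique maximum among X1,...,Xn]. -/

import Mathlib

/-!
The joint law of `(X₁, …, Xₙ)` is the product measure `D ^ n`, which is invariant under
permutations of the coordinates. The swap of `i` and `i'` carries the event "`i'` is the unique
maximum" to "`i` is the unique maximum", so `E[Xᵢ | i max] = E[Xᵢ' | i' max]`, while on the event
"`i'` is the unique maximum" we have `Xᵢ < Xᵢ'` pointwise. The events "`k` is the unique maximum"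
are equiprobable and, ties being null for a non-atomic `D`, they cover almost everything, so each
has positive probability and the strict pointwise inequality survives integration.
-/

open MeasureTheory ProbabilityTheory Set

namespace MeasureTheory

variable {α : Type*} [MeasurableSpace α] {μ : Measure α}

theorem integral_lt_integral_of_ae_lt [NeZero μ] {f g : α → ℝ} (hf : Integrable f μ)
    (hg : Integrable g μ) (hfg : ∀ᵐ x ∂μ, f x < g x) : ∫ x, f x ∂μ < ∫ x, g x ∂μ := by
  rw [← sub_pos, ← integral_sub hg hf, integral_pos_iff_support_of_nonneg_ae
    (hfg.mono fun x hx => sub_nonneg.2 hx.le) (hg.sub hf), pos_iff_ne_zero]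
  intro h0
  obtain ⟨x, hlt, hx⟩ := (hfg.and (measure_eq_zero_iff_ae_notMem.1 h0)).exists
  simp only [Function.mem_support, not_not, sub_eq_zero] at hx
  exact hlt.ne' hx

theorem Integrable.cond {f : α → ℝ} (hf : Integrable f μ) (s : Set α) : Integrable f μ[|s] := by
  by_cases hs : μ s = 0
  · rw [cond_eq_zero_of_meas_eq_zero hs]
    exact integrable_zero_measure
  · exact hf.restrict.smul_measure (ENNReal.inv_ne_top.2 hs)

theorem Measure.prod_diagonal_eq_zero [MeasurableEq α] (ν : Measure α) [SFinite ν]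
    [NullSingletonClass ν] : (μ.prod ν) (diagonal α) = 0 := by
  have hfiber : ∀ x, Prod.mk x ⁻¹' diagonal α = {x} := fun x => by ext; simp [eq_comm]
  simp [Measure.prod_apply measurableSet_diagonal, hfiber]

theorem measurePreserving_comp_perm {ι : Type*} [Fintype ι] (ν : Measure α) [SigmaFinite ν]
    (σ : Equiv.Perm ι) :
    MeasurePreserving (fun x : ι → α => x ∘ σ) (Measure.pi fun _ => ν) (Measure.pi fun _ => ν) :=
  measurePreserving_arrowCongr' _ _ σ.symm (MeasurableEquiv.refl α) fun _ => .id ν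

theorem integrable_id_of_isCompact_measure_eq_one {ν : Measure ℝ} [IsProbabilityMeasure ν]
    {K : Set ℝ} (hK : IsCompact K) (hνK : ν K = 1) : Integrable id ν := by
  have hae : ∀ᵐ x ∂ν, x ∈ K := (mem_ae_iff_prob_eq_one hK.measurableSet).2 hνK
  rw [← Measure.restrict_eq_self_of_ae_mem hae]
  exact continuous_id.continuousOn.integrableOn_compact hK

end MeasureTheory

namespace ProbabilityTheory

variable {α β : Type*} [MeasurableSpace α] [MeasurableSpace β] {μ : Measure α}

theorem cond_map {f : α → β} (hf : Measurable f) {s : Set β} (hs : MeasurableSet s) :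
    (μ.map f)[|s] = (μ[|f ⁻¹' s]).map f := by
  rw [cond, cond, Measure.map_smul, ← Measure.restrict_map hf hs, Measure.map_apply hf hs]

theorem integral_cond_preimage {f : α → β} (hf : Measurable f) {s : Set β}
    (hs : MeasurableSet s) {g : β → ℝ} (hg : Measurable g) :
    ∫ x, g (f x) ∂μ[|f ⁻¹' s] = ∫ y, g y ∂(μ.map f)[|s] := by
  rw [cond_map hf hs, integral_map hf.aemeasurable hg.aestronglyMeasurable]

end ProbabilityTheory

section UniqueMax

variable {ι α : Type*} [LinearOrder α]

def uniqueMaxAt (k : ι) : Set (ι → α) := {x | ∀ j, j ≠ k → x j < x k}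

theorem preimage_comp_perm_uniqueMaxAt (σ : Equiv.Perm ι) (k : ι) :
    (fun x : ι → α => x ∘ σ) ⁻¹' uniqueMaxAt k = uniqueMaxAt (σ k) := by
  ext x
  simp only [uniqueMaxAt, mem_preimage, mem_ofPred_eq, Function.comp_apply]
  refine ⟨fun h j hj => ?_, fun h j hj => h (σ j) (σ.injective.ne hj)⟩
  simpa using h (σ.symm j) (by rintro rfl; simp at hj)

theorem compl_iUnion_uniqueMaxAt_subset [Finite ι] [Nonempty ι] :
    (⋃ k, uniqueMaxAt k)ᶜ ⊆ ⋃ (j) (k) (_ : j ≠ k), {x : ι → α | x j = x k} := by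
  intro x hx
  obtain ⟨k, hk⟩ := Finite.exists_max x
  simp only [uniqueMaxAt, mem_compl_iff, mem_iUnion, mem_ofPred_eq, not_exists, not_forall,
    not_lt] at hx
  obtain ⟨j, hjk, hkj⟩ := hx k
  exact mem_iUnion₂.2 ⟨j, k, mem_iUnion.2 ⟨hjk, (hk j).antisymm hkj⟩⟩

variable [Fintype ι] [MeasurableSpace α] [TopologicalSpace α] [OrderClosedTopology α]
  [SecondCountableTopology α] [OpensMeasurableSpace α] (ν : Measure α)

theorem measurableSet_uniqueMaxAt (k : ι) : MeasurableSet (uniqueMaxAt (α := α) k) := by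
  have : uniqueMaxAt (α := α) k = ⋂ j, ⋂ (_ : j ≠ k), {x | x j < x k} := by
    ext; simp [uniqueMaxAt]
  rw [this]
  exact .iInter fun j => .iInter fun _ =>
    measurableSet_lt (measurable_pi_apply j) (measurable_pi_apply k)

theorem measure_pi_uniqueMaxAt_eq [SigmaFinite ν] (k l : ι) :
    Measure.pi (fun _ => ν) (uniqueMaxAt k) = Measure.pi (fun _ => ν) (uniqueMaxAt l) := by
  classical
  have h := (measurePreserving_comp_perm ν (Equiv.swap k l)).measure_preimage
    (measurableSet_uniqueMaxAt l).nullMeasurableSet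
  rwa [preimage_comp_perm_uniqueMaxAt, Equiv.swap_apply_right] at h

theorem integral_cond_uniqueMaxAt_comp_eval [SigmaFinite ν] {g : α → ℝ} (hg : Measurable g)
    (k l : ι) :
    ∫ x, g (x k) ∂(Measure.pi fun _ => ν)[|uniqueMaxAt k] =
      ∫ x, g (x l) ∂(Measure.pi fun _ => ν)[|uniqueMaxAt l] := by
  classical
  have hpre : (fun x : ι → α => x ∘ Equiv.swap k l) ⁻¹' uniqueMaxAt k = uniqueMaxAt l := by
    rw [preimage_comp_perm_uniqueMaxAt, Equiv.swap_apply_left]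
  have h := integral_cond_preimage (μ := Measure.pi fun _ => ν)
    (measurePreserving_comp_perm ν (Equiv.swap k l)).measurable (measurableSet_uniqueMaxAt k)
    (hg.comp (measurable_pi_apply k))
  rw [hpre, (measurePreserving_comp_perm ν (Equiv.swap k l)).map_eq] at h
  simpa using h.symm

variable [IsProbabilityMeasure ν] [NullSingletonClass ν]

theorem measure_pi_setOf_eq_eq_zero {j k : ι} (hjk : j ≠ k) :
    Measure.pi (fun _ => ν) {x | x j = x k} = 0 := by
  have hind : IndepFun (fun x : ι → α => x j) (fun x => x k) (Measure.pi fun _ => ν) :=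
    (iIndepFun_pi (X := fun _ => id) fun _ => aemeasurable_id).indepFun hjk
  have hlaw : (Measure.pi fun _ => ν).map (fun x => (x j, x k)) = ν.prod ν := by
    rw [(indepFun_iff_map_prod_eq_prod_map_map (measurable_pi_apply j).aemeasurable
      (measurable_pi_apply k).aemeasurable).1 hind, (measurePreserving_eval _ j).map_eq,
      (measurePreserving_eval _ k).map_eq]
  have hdiag : {x : ι → α | x j = x k} = (fun x => (x j, x k)) ⁻¹' diagonal α := rfl
  rw [hdiag, ← Measure.map_apply (by fun_prop) measurableSet_diagonal, hlaw,
    Measure.prod_diagonal_eq_zero]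

theorem measure_pi_uniqueMaxAt_ne_zero (k : ι) :
    Measure.pi (fun _ => ν) (uniqueMaxAt k) ≠ 0 := by
  have : Nonempty ι := ⟨k⟩
  intro h0
  have hmax : Measure.pi (fun _ => ν) (⋃ l, uniqueMaxAt l) = 0 :=
    measure_iUnion_null fun l => (measure_pi_uniqueMaxAt_eq ν l k).trans h0
  have hties : Measure.pi (fun _ => ν) (⋃ (j) (k) (_ : j ≠ k), {x : ι → α | x j = x k}) = 0 :=
    measure_iUnion_null fun _ => measure_iUnion_null fun _ => measure_iUnion_null
      (measure_pi_setOf_eq_eq_zero ν)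
  have huniv : Measure.pi (fun _ => ν) univ = 0 :=
    measure_mono_null ((union_compl_self _).symm.subset.trans
      (union_subset_union_right _ compl_iUnion_uniqueMaxAt_subset)) (measure_union_null hmax hties)
  simp at huniv

end UniqueMax

theorem integral_cond_uniqueMaxAt_lt {ι : Type*} [Fintype ι] (ν : Measure ℝ)
    [IsProbabilityMeasure ν] [NullSingletonClass ν] (hν : Integrable id ν) {i i' : ι}
    (hii' : i ≠ i') :
    ∫ x, x i ∂(Measure.pi fun _ => ν)[|uniqueMaxAt i'] <
      ∫ x, x i ∂(Measure.pi fun _ => ν)[|uniqueMaxAt i] := by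
  have := cond_isProbabilityMeasure (measure_pi_uniqueMaxAt_ne_zero ν i')
  calc ∫ x, x i ∂(Measure.pi fun _ => ν)[|uniqueMaxAt i']
      < ∫ x, x i' ∂(Measure.pi fun _ => ν)[|uniqueMaxAt i'] :=
        integral_lt_integral_of_ae_lt ((integrable_eval hν).cond _) ((integrable_eval hν).cond _)
          ((ae_cond_mem (measurableSet_uniqueMaxAt i')).mono fun x hx => hx i hii')
    _ = ∫ x, x i ∂(Measure.pi fun _ => ν)[|uniqueMaxAt i] :=
        integral_cond_uniqueMaxAt_comp_eval ν measurable_id i' i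

theorem utility_gap_general
    {Ω : Type*} [MeasurableSpace Ω] (μ : Measure Ω) [IsProbabilityMeasure μ]
    (n : ℕ) (X : Fin n → Ω → ℝ) (D : Measure ℝ) [IsProbabilityMeasure D]
    (hmeas : ∀ i, Measurable (X i))
    (hindep : iIndepFun X μ)
    (hdist : ∀ i, Measure.map (X i) μ = D)
    (hsupp : D (Set.Icc (0 : ℝ) 1) = 1)
    (hnonatomic : ∀ x : ℝ, D {x} = 0)
    (i i' : Fin n) (hii' : i ≠ i') :
    (∫ ω, X i ω ∂(μ[|{ω | ∀ j, j ≠ i → X j ω < X i ω}])) >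
      (∫ ω, X i ω ∂(μ[|{ω | ∀ j, j ≠ i' → X j ω < X i' ω}])) := by
  have hX : Measurable fun ω j => X j ω := measurable_pi_lambda _ hmeas
  have hlaw : μ.map (fun ω j => X j ω) = Measure.pi fun _ => D := by
    simp only [hindep.map_fun_eq_pi_map fun j => (hmeas j).aemeasurable, hdist]
  have : NullSingletonClass D := ⟨hnonatomic⟩
  have hD : Integrable id D := integrable_id_of_isCompact_measure_eq_one isCompact_Icc hsupp
  have htransfer (k : Fin n) :
      ∫ ω, X i ω ∂μ[|{ω | ∀ j, j ≠ k → X j ω < X k ω}] =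
        ∫ x, x i ∂(Measure.pi fun _ => D)[|uniqueMaxAt k] := by
    rw [← hlaw]
    exact integral_cond_preimage hX (measurableSet_uniqueMaxAt k) (measurable_pi_apply i)
  rw [htransfer, htransfer]
  exact integral_cond_uniqueMaxAt_lt D hD hii'

/-- Lemma "Utility-Gap": for i.i.d. draws from a non-atomic distribution on `[0,1]`,
the conditional expectation of `X i` given that `X i` is the unique maximum is strictly
greater than its conditional expectation given that `X i'` is the unique maximum. -/
theorem utility_gap
    {Ω : Type*} [MeasurableSpace Ω] (μ : Measure Ω) [IsProbabilityMeasure μ]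
    (n : ℕ) (hn : 2 ≤ n) (X : Fin n → Ω → ℝ) (D : Measure ℝ) [IsProbabilityMeasure D]
    (hmeas : ∀ i, Measurable (X i))
    (hindep : iIndepFun X μ)
    (hdist : ∀ i, Measure.map (X i) μ = D)
    (hsupp : D (Set.Icc (0 : ℝ) 1) = 1)
    (hnonatomic : ∀ x : ℝ, D {x} = 0)
    (i i' : Fin n) (hii' : i ≠ i') :
    (∫ ω, X i ω ∂(μ[|{ω | ∀ j, j ≠ i → X j ω < X i ω}])) >
      (∫ ω, X i ω ∂(μ[|{ω | ∀ j, j ≠ i' → X j ω < X i' ω}])) :=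
  utility_gap_general μ n X D hmeas hindep hdist hsupp hnonatomic i i' hii'
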